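/- Let s ≥ 2, and let G = ⟨h,g⟩ ≤ Sym(4s) with h = (1,2), g = (1,3,…,4s−1)(2,4,…,4s), and H = ⟨h, h^g, …, h^{g^{s−1}}⟩, R = ⟨a,b⟩ with a = (2s−1,2s)(4s−1,4s), b = gh. Then R ∩ H = 1 and |G| = |R|·|H|, so R is a right transversal of H in G. -/

import Mathlib

/-!
Label the point `2j + p + 1` of `{1, …, 4s}` by `(j, p) ∈ ℤ/2s × ℤ/2`. Then `h` toggles the lamp
over `j = 0` and `g` rotates by one, so `G` lies in the lamplighter group `C₂ ≀ C_{2s}` of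
permutations `toggle v * rotate k`, and `H` consists of the toggles supported on `{0, …, s-1}`.
Conjugating `a` by powers of `b` gives the toggles of all antipodal pairs `{c, c + s}`, and `b^{2s}`
is a rotation-invariant, hence `s`-periodic, toggle; so every element of `R` is `toggle v * b^m`
with `v` `s`-periodic. An element of `R ∩ H` therefore has rotation part zero, so it is a toggle
that is both `s`-periodic and supported on `{0, …, s-1}`, hence trivial. Conversely `R H` is stable
under left multiplication by `h` (moving `h` past `r ∈ R` leaves a single toggle, which lies in
`H` or in (antipodal pair) · `H`) and by `g = h b`, so `G = R H` and `(r, k) ↦ r k` is a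
bijection `R × H → G`.
-/

open Equiv Function
open scoped Pointwise

namespace Subgroup

variable {M : Type*} [Group M]

theorem closure_subset_mul_of_forall_mul_mem [Finite M] {S : Set M} {R H : Subgroup M}
    (hS : ∀ x ∈ S, ∀ r ∈ R, x * r ∈ (R : Set M) * (H : Set M)) :
    (closure S : Set M) ⊆ (R : Set M) * (H : Set M) := by
  intro x hx
  rw [SetLike.mem_coe, ← mem_toSubmonoid, closure_toSubmonoid_of_finite] at hx
  induction hx using Submonoid.closure_induction_left with
  | one => exact Set.mem_mul.2 ⟨1, one_mem R, 1, one_mem H, mul_one 1⟩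
  | mul_left x hx y _ ih =>
    obtain ⟨r, hr, k, hk, rfl⟩ := Set.mem_mul.1 ih
    obtain ⟨r', hr', k', hk', he⟩ := Set.mem_mul.1 (hS x hx r hr)
    exact Set.mem_mul.2 ⟨r', hr', k' * k, mul_mem hk' hk, by rw [← mul_assoc, he, mul_assoc]⟩

theorem card_eq_card_mul_card_of_subset_mul {G R H : Subgroup M} (hRG : R ≤ G) (hHG : H ≤ G)
    (hRH : Disjoint R H) (hG : (G : Set M) ⊆ (R : Set M) * (H : Set M)) :
    Nat.card G = Nat.card R * Nat.card H := by
  rw [← Nat.card_prod]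
  refine (Nat.card_eq_of_bijective
    (fun p : R × H => (⟨p.1 * p.2, mul_mem (hRG p.1.2) (hHG p.2.2)⟩ : G)) ⟨?_, ?_⟩).symm
  · exact fun p q hpq => mul_injective_of_disjoint hRH (congrArg Subtype.val hpq)
  · rintro ⟨x, hx⟩
    obtain ⟨r, hr, k, hk, rfl⟩ := hG hx
    exact ⟨(⟨r, hr⟩, ⟨k, hk⟩), rfl⟩

theorem existsUnique_inv_mul_mem_of_mem_mul {R H : Subgroup M} (hRH : Disjoint R H) {x : M}
    (hx : x ∈ (R : Set M) * (H : Set M)) : ∃! r, r ∈ R ∧ x⁻¹ * r ∈ H := by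
  obtain ⟨r, hr, k, hk, rfl⟩ := hx
  refine ⟨r, ⟨hr, by simpa [mul_assoc] using inv_mem hk⟩, ?_⟩
  rintro r' ⟨hr', hk'⟩
  have : r⁻¹ * r' ∈ H := by simpa [mul_assoc] using mul_mem hk hk'
  exact (inv_mul_eq_one.1 (disjoint_def.1 hRH (mul_mem (inv_mem hr) hr') this)).symm

theorem coe_map_subset_mul {N : Type*} [Group N] (f : M →* N) {G R H : Subgroup M}
    (hG : (G : Set M) ⊆ (R : Set M) * (H : Set M)) :
    (G.map f : Set N) ⊆ (R.map f : Set N) * (H.map f : Set N) := by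
  simpa only [coe_map, ← Set.image_mul] using Set.image_mono hG

end Subgroup

namespace Lamplighter

section Generic

variable {n : ℕ}

def toggle (v : ZMod n → ZMod 2) : Perm (ZMod n × ZMod 2) where
  toFun x := (x.1, x.2 + v x.1)
  invFun x := (x.1, x.2 + v x.1)
  left_inv x := by simp [add_assoc, CharTwo.add_self_eq_zero]
  right_inv x := by simp [add_assoc, CharTwo.add_self_eq_zero]

def rotate (k : ZMod n) : Perm (ZMod n × ZMod 2) where
  toFun x := (x.1 + k, x.2)
  invFun x := (x.1 - k, x.2)
  left_inv x := by simp
  right_inv x := by simp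

@[simp] lemma toggle_apply (v : ZMod n → ZMod 2) (x : ZMod n × ZMod 2) :
    toggle v x = (x.1, x.2 + v x.1) := rfl

@[simp] lemma rotate_apply (k : ZMod n) (x : ZMod n × ZMod 2) :
    rotate k x = (x.1 + k, x.2) := rfl

lemma toggle_add (v w : ZMod n → ZMod 2) : toggle (v + w) = toggle v * toggle w := by
  ext x <;> simp; ring

@[simp] lemma toggle_zero : toggle (0 : ZMod n → ZMod 2) = 1 := by
  ext x <;> simp

lemma toggle_mul_self (v : ZMod n → ZMod 2) : toggle v * toggle v = 1 := by
  rw [← toggle_add, CharTwo.add_self_eq_zero, toggle_zero]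

@[simp] lemma toggle_inv (v : ZMod n → ZMod 2) : (toggle v)⁻¹ = toggle v :=
  inv_eq_of_mul_eq_one_right (toggle_mul_self v)

lemma toggle_pow (v : ZMod n → ZMod 2) (t : ℕ) : toggle v ^ t = toggle (t • v) := by
  induction t with
  | zero => simp
  | succ t ih => rw [pow_succ, ih, succ_nsmul, toggle_add]

lemma commute_toggle (v w : ZMod n → ZMod 2) : Commute (toggle v) (toggle w) := by
  rw [Commute, SemiconjBy, ← toggle_add, ← toggle_add, add_comm]

@[simp] lemma rotate_zero : rotate (0 : ZMod n) = 1 := by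
  ext x <;> simp

lemma rotate_add (k l : ZMod n) : rotate (k + l) = rotate k * rotate l := by
  ext x <;> simp; ring

lemma rotate_pow (k : ZMod n) (m : ℕ) : rotate k ^ m = rotate (m • k) := by
  induction m with
  | zero => simp
  | succ m ih => rw [pow_succ, ih, succ_nsmul, rotate_add]

lemma rotate_mul_toggle (k : ZMod n) (w : ZMod n → ZMod 2) :
    rotate k * toggle w = toggle (fun j => w (j - k)) * rotate k := by
  ext x <;> simp

lemma eq_of_toggle_mul_rotate_eq {v w : ZMod n → ZMod 2} {k l : ZMod n}
    (h : toggle v * rotate k = toggle w * rotate l) : v = w ∧ k = l := by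
  have hk : k = l := by simpa using congrArg Prod.fst (DFunLike.congr_fun h (0, 0))
  subst hk
  refine ⟨funext fun j => ?_, rfl⟩
  simpa using congrArg Prod.snd (DFunLike.congr_fun h (j - k, 0))

lemma toggle_injective : Injective (toggle : (ZMod n → ZMod 2) → Perm (ZMod n × ZMod 2)) :=
  fun v w h => (eq_of_toggle_mul_rotate_eq (k := 0) (l := 0) (by rw [h])).1

lemma toggle_mul_rotate_mul_toggle (v w : ZMod n → ZMod 2) (k : ZMod n) :
    toggle v * rotate k * toggle w = toggle (fun j => w (j - k)) * (toggle v * rotate k) := by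
  rw [mul_assoc, rotate_mul_toggle, ← mul_assoc, (commute_toggle _ _).eq, mul_assoc]

lemma exists_toggle_mul_rotate_pow (v : ZMod n → ZMod 2) (k : ZMod n) (m : ℕ) :
    ∃ c, (toggle v * rotate k) ^ m = toggle c * rotate (m • k) := by
  induction m with
  | zero => exact ⟨0, by simp⟩
  | succ m ih =>
    obtain ⟨c, hc⟩ := ih
    refine ⟨c + fun j => v (j - m • k), ?_⟩
    rw [pow_succ, hc, succ_nsmul, rotate_add, toggle_add, ← mul_assoc, mul_assoc (toggle c),
      rotate_mul_toggle, ← mul_assoc, mul_assoc _ _ (rotate k)]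

lemma toggle_mul_rotate_pow_mul_toggle (v w : ZMod n → ZMod 2) (k : ZMod n) (m : ℕ) :
    (toggle v * rotate k) ^ m * toggle w =
      toggle (fun j => w (j - m • k)) * (toggle v * rotate k) ^ m := by
  obtain ⟨c, hc⟩ := exists_toggle_mul_rotate_pow v k m
  rw [hc, toggle_mul_rotate_mul_toggle]

end Generic

lemma single_comp_sub_eq {A B : Type*} [AddGroup A] [DecidableEq A] [Zero B] (c k : A) (x : B) :
    (fun j => (Pi.single c x : A → B) (j - k)) = Pi.single (c + k) x := by
  ext j
  simp only [Pi.single_apply, sub_eq_iff_eq_add]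

section Configuration

variable (s : ℕ)

def h₀ : Perm (ZMod (2 * s) × ZMod 2) := toggle (Pi.single 0 1)

def g₀ : Perm (ZMod (2 * s) × ZMod 2) := rotate 1

def antipodalPair (c : ZMod (2 * s)) : ZMod (2 * s) → ZMod 2 := Pi.single c 1 + Pi.single (c + s) 1

def a₀ : Perm (ZMod (2 * s) × ZMod 2) := toggle (antipodalPair s ((s - 1 : ℕ) : ZMod (2 * s)))

def G₀ : Subgroup (Perm (ZMod (2 * s) × ZMod 2)) := Subgroup.closure {h₀ s, g₀ s}

def R₀ : Subgroup (Perm (ZMod (2 * s) × ZMod 2)) := Subgroup.closure {a₀ s, h₀ s * g₀ s}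

def H₀ : Subgroup (Perm (ZMod (2 * s) × ZMod 2)) :=
  Subgroup.closure {x | ∃ i : Fin s, x = g₀ s ^ (i : ℕ) * h₀ s * (g₀ s ^ (i : ℕ))⁻¹}

variable {s}

lemma natCast_add_self_eq_zero : (s : ZMod (2 * s)) + s = 0 := by
  rw [← Nat.cast_add, ← two_mul, ZMod.natCast_self]

lemma antipodalPair_periodic (c : ZMod (2 * s)) : Periodic (antipodalPair s c) s := by
  have hs : ∀ x y : ZMod (2 * s), x + s = y ↔ x = y + s := fun x y => by
    constructor <;> rintro rfl <;> rw [add_assoc, natCast_add_self_eq_zero, add_zero]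
  intro j
  simp only [antipodalPair, Pi.add_apply, Pi.single_apply, hs, add_assoc c,
    natCast_add_self_eq_zero, add_zero]
  exact add_comm _ _

lemma antipodalPair_comp_sub_eq (c k : ZMod (2 * s)) :
    (fun j => antipodalPair s c (j - k)) = antipodalPair s (c + k) := by
  ext j
  simp only [antipodalPair, Pi.add_apply, Pi.single_apply, sub_eq_iff_eq_add, add_right_comm c]

lemma h₀_mul_self : h₀ s * h₀ s = 1 := toggle_mul_self _

lemma g₀_pow_mul_h₀_mul_inv (i : ℕ) :
    g₀ s ^ i * h₀ s * (g₀ s ^ i)⁻¹ = toggle (Pi.single (i : ZMod (2 * s)) 1) := by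
  rw [g₀, h₀, rotate_pow, rotate_mul_toggle, mul_inv_cancel_right, single_comp_sub_eq, zero_add,
    nsmul_one]

lemma exists_h₀_mul_g₀_pow (m : ℕ) :
    ∃ c, (h₀ s * g₀ s) ^ m = toggle c * rotate (m : ZMod (2 * s)) := by
  rw [h₀, g₀]
  simpa only [nsmul_one] using exists_toggle_mul_rotate_pow (Pi.single 0 1) (1 : ZMod (2 * s)) m

lemma h₀_mul_g₀_pow_mul_toggle (m : ℕ) (w : ZMod (2 * s) → ZMod 2) :
    (h₀ s * g₀ s) ^ m * toggle w =
      toggle (fun j => w (j - (m : ZMod (2 * s)))) * (h₀ s * g₀ s) ^ m := by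
  rw [h₀, g₀]
  simpa only [nsmul_one] using
    toggle_mul_rotate_pow_mul_toggle (Pi.single 0 1) w (1 : ZMod (2 * s)) m

lemma exists_periodic_h₀_mul_g₀_pow_two_mul :
    ∃ c, Periodic c (s : ZMod (2 * s)) ∧ (h₀ s * g₀ s) ^ (2 * s) = toggle c := by
  obtain ⟨c, hc⟩ := exists_h₀_mul_g₀_pow (s := s) (2 * s)
  rw [ZMod.natCast_self, rotate_zero, mul_one] at hc
  refine ⟨c, ?_, hc⟩
  have hcomm : (h₀ s * g₀ s) ^ 1 * toggle c = toggle c * (h₀ s * g₀ s) ^ 1 := by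
    rw [pow_one, ← hc, ← pow_succ, ← pow_succ']
  -- `c` is invariant under rotation by one because `b^{2s}` commutes with `b`.
  rw [h₀_mul_g₀_pow_mul_toggle] at hcomm
  have hc1 : (fun j => c (j - ((1 : ℕ) : ZMod (2 * s)))) = c :=
    toggle_injective (mul_right_cancel hcomm)
  have hper : Periodic c 1 := fun j => by simpa using (congrFun hc1 (j + 1)).symm
  simpa using hper.nat_mul s

variable (s) in
def periodicTogglesMulPowers : Submonoid (Perm (ZMod (2 * s) × ZMod 2)) where
  carrier := {x | ∃ v m, Periodic v (s : ZMod (2 * s)) ∧ x = toggle v * (h₀ s * g₀ s) ^ m}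
  one_mem' := ⟨0, 0, fun _ => rfl, by simp⟩
  mul_mem' := by
    rintro _ _ ⟨v, m, hv, rfl⟩ ⟨w, p, hw, rfl⟩
    refine ⟨v + fun j => w (j - m), m + p, hv.add (hw.sub_const _), ?_⟩
    rw [toggle_add, pow_add, mul_assoc, ← mul_assoc (_ ^ m), h₀_mul_g₀_pow_mul_toggle]
    simp only [mul_assoc]

variable (s) in
def lowerToggles : Subgroup (Perm (ZMod (2 * s) × ZMod 2)) where
  carrier := {x | ∃ v : ZMod (2 * s) → ZMod 2, (∀ j, s ≤ j.val → v j = 0) ∧ x = toggle v}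
  one_mem' := ⟨0, fun _ _ => rfl, toggle_zero.symm⟩
  mul_mem' := by
    rintro _ _ ⟨v, hv, rfl⟩ ⟨w, hw, rfl⟩
    exact ⟨v + w, fun j hj => by simp [hv j hj, hw j hj], (toggle_add v w).symm⟩
  inv_mem' := by
    rintro _ ⟨v, hv, rfl⟩
    exact ⟨v, hv, toggle_inv v⟩

lemma H₀_le_lowerToggles : H₀ s ≤ lowerToggles s := by
  rw [H₀, Subgroup.closure_le]
  rintro _ ⟨i, rfl⟩
  refine ⟨Pi.single ((i : ℕ) : ZMod (2 * s)) 1, fun j hj => Pi.single_eq_of_ne ?_ _,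
    g₀_pow_mul_h₀_mul_inv i⟩
  rintro rfl
  rw [ZMod.val_cast_of_lt (by omega)] at hj
  omega

variable [NeZero s]

lemma eq_zero_of_periodic_of_vanishes_on_upper_half {v : ZMod (2 * s) → ZMod 2}
    (hv : Periodic v (s : ZMod (2 * s))) (hlow : ∀ j : ZMod (2 * s), s ≤ j.val → v j = 0) :
    v = 0 := by
  funext j
  by_cases hj : s ≤ j.val
  · exact hlow j hj
  · have hs : (s : ZMod (2 * s)).val = s :=
      ZMod.val_cast_of_lt (by have := NeZero.pos s; omega)
    have hjs : (j + s).val = j.val + s := by rw [ZMod.val_add_of_lt (by rw [hs]; omega), hs]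
    rw [← hv j]
    exact hlow _ (by omega)

lemma R₀_le_periodicTogglesMulPowers : (R₀ s).toSubmonoid ≤ periodicTogglesMulPowers s := by
  rw [R₀, Subgroup.closure_toSubmonoid_of_finite, Submonoid.closure_le]
  rintro _ (rfl | rfl)
  · exact ⟨_, 0, antipodalPair_periodic _, by rw [pow_zero, mul_one]; rfl⟩
  · exact ⟨0, 1, fun _ => rfl, by rw [toggle_zero, one_mul, pow_one]⟩

lemma disjoint_R₀_H₀ : Disjoint (R₀ s) (H₀ s) := by
  rw [Subgroup.disjoint_def]
  intro x hxR hxH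
  obtain ⟨v, m, hv, rfl⟩ := R₀_le_periodicTogglesMulPowers hxR
  obtain ⟨q, hq, hxq⟩ := H₀_le_lowerToggles hxH
  obtain ⟨c, hc⟩ := exists_h₀_mul_g₀_pow (s := s) m
  have hm : (m : ZMod (2 * s)) = 0 := by
    rw [hc, ← mul_assoc, ← toggle_add, ← mul_one (toggle q), ← rotate_zero] at hxq
    exact (eq_of_toggle_mul_rotate_eq hxq).2
  obtain ⟨t, rfl⟩ := (ZMod.natCast_eq_zero_iff m _).1 hm
  obtain ⟨c₀, hc₀, hpow⟩ := exists_periodic_h₀_mul_g₀_pow_two_mul (s := s)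
  rw [pow_mul, hpow, toggle_pow, ← toggle_add] at hxq ⊢
  have hqper : Periodic q (s : ZMod (2 * s)) := toggle_injective hxq ▸ hv.add (hc₀.smul t)
  rw [hxq, eq_zero_of_periodic_of_vanishes_on_upper_half hqper hq, toggle_zero]

lemma toggle_antipodalPair_mem_R₀ (c : ZMod (2 * s)) : toggle (antipodalPair s c) ∈ R₀ s := by
  have ha : a₀ s ∈ R₀ s := Subgroup.subset_closure (Set.mem_insert _ _)
  have hb : h₀ s * g₀ s ∈ R₀ s := Subgroup.subset_closure (Set.mem_insert_of_mem _ rfl)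
  set k := (c - ((s - 1 : ℕ) : ZMod (2 * s))).val
  have hconj : (h₀ s * g₀ s) ^ k * a₀ s * ((h₀ s * g₀ s) ^ k)⁻¹ = toggle (antipodalPair s c) := by
    rw [a₀, h₀_mul_g₀_pow_mul_toggle, mul_inv_cancel_right, antipodalPair_comp_sub_eq,
      ZMod.natCast_zmod_val, add_sub_cancel]
  rw [← hconj]
  exact mul_mem (mul_mem (pow_mem hb k) ha) (inv_mem (pow_mem hb k))

lemma toggle_single_mem_R₀_mul_H₀ (c : ZMod (2 * s)) :
    toggle (Pi.single c 1) ∈ (R₀ s : Set (Perm (ZMod (2 * s) × ZMod 2))) * (H₀ s : Set _) := by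
  have hH : ∀ i : ℕ, i < s → toggle (Pi.single (i : ZMod (2 * s)) 1) ∈ H₀ s := fun i hi =>
    Subgroup.subset_closure ⟨⟨i, hi⟩, (g₀_pow_mul_h₀_mul_inv i).symm⟩
  by_cases hc : c.val < s
  · exact ⟨1, one_mem _, _, ZMod.natCast_zmod_val c ▸ hH c.val hc, one_mul _⟩
  · set i := c.val - s
    have hci : c = (i : ZMod (2 * s)) + s := by
      rw [← Nat.cast_add, Nat.sub_add_cancel (by omega), ZMod.natCast_zmod_val]
    have hi : i < s := by have := ZMod.val_lt c; omega
    refine Set.mem_mul.2 ⟨_, toggle_antipodalPair_mem_R₀ i, _, hH i hi, ?_⟩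
    rw [← toggle_add, antipodalPair, add_right_comm, CharTwo.add_self_eq_zero, zero_add, hci]

lemma h₀_mul_mem_R₀_mul_H₀ {r : Perm (ZMod (2 * s) × ZMod 2)} (hr : r ∈ R₀ s) :
    h₀ s * r ∈ (R₀ s : Set (Perm (ZMod (2 * s) × ZMod 2))) * (H₀ s : Set _) := by
  obtain ⟨v, m, -, rfl⟩ := R₀_le_periodicTogglesMulPowers hr
  obtain ⟨c, hc⟩ := exists_h₀_mul_g₀_pow (s := s) m
  have hx : toggle v * (h₀ s * g₀ s) ^ m = toggle (v + c) * rotate (m : ZMod (2 * s)) := by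
    rw [hc, ← mul_assoc, toggle_add]
  rw [hx] at hr ⊢
  set k : ZMod (2 * s) := (m : ZMod (2 * s))
  have hswap : h₀ s * (toggle (v + c) * rotate k) =
      toggle (v + c) * rotate k * toggle (Pi.single (-k) 1) := by
    rw [toggle_mul_rotate_mul_toggle, single_comp_sub_eq, neg_add_cancel]
    rfl
  obtain ⟨r', hr', k', hk', hrk⟩ := Set.mem_mul.1 (toggle_single_mem_R₀_mul_H₀ (-k))
  rw [hswap, ← hrk, ← mul_assoc]
  exact Set.mem_mul.2 ⟨_, mul_mem hr hr', k', hk', rfl⟩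

lemma G₀_subset_R₀_mul_H₀ :
    (G₀ s : Set (Perm (ZMod (2 * s) × ZMod 2))) ⊆ (R₀ s : Set _) * (H₀ s : Set _) := by
  refine Subgroup.closure_subset_mul_of_forall_mul_mem ?_
  rintro _ (rfl | rfl) r hr
  · exact h₀_mul_mem_R₀_mul_H₀ hr
  · have hb : h₀ s * g₀ s ∈ R₀ s := Subgroup.subset_closure (Set.mem_insert_of_mem _ rfl)
    have := h₀_mul_mem_R₀_mul_H₀ (mul_mem hb hr)
    rwa [← mul_assoc, ← mul_assoc, h₀_mul_self, one_mul] at this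

lemma toggle_single_mem_G₀ (c : ZMod (2 * s)) : toggle (Pi.single c 1) ∈ G₀ s := by
  have hh : h₀ s ∈ G₀ s := Subgroup.subset_closure (Set.mem_insert _ _)
  have hg : g₀ s ∈ G₀ s := Subgroup.subset_closure (Set.mem_insert_of_mem _ rfl)
  rw [← ZMod.natCast_zmod_val c, ← g₀_pow_mul_h₀_mul_inv]
  exact mul_mem (mul_mem (pow_mem hg _) hh) (inv_mem (pow_mem hg _))

lemma R₀_le_G₀ : R₀ s ≤ G₀ s := by
  rw [R₀, Subgroup.closure_le]
  rintro _ (rfl | rfl)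
  · rw [a₀, antipodalPair, toggle_add]
    exact mul_mem (toggle_single_mem_G₀ _) (toggle_single_mem_G₀ _)
  · exact mul_mem (toggle_single_mem_G₀ 0) (Subgroup.subset_closure (Set.mem_insert_of_mem _ rfl))

lemma H₀_le_G₀ : H₀ s ≤ G₀ s := by
  rw [H₀, Subgroup.closure_le]
  rintro _ ⟨i, rfl⟩
  rw [g₀_pow_mul_h₀_mul_inv]
  exact toggle_single_mem_G₀ _

end Configuration

section Bridge

lemma toggle_single_eq_swap {n : ℕ} (c : ZMod n) :
    toggle (Pi.single c 1) = swap (c, 0) (c, 1) := by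
  ext ⟨j, p⟩ : 1
  by_cases hj : j = c
  · subst hj
    obtain rfl | rfl : p = 0 ∨ p = 1 := by revert p; decide
    · simp
    · simp [CharTwo.add_self_eq_zero]
  · simp [swap_apply_of_ne_of_ne, hj]

variable (s : ℕ) [NeZero s]

def pointEquiv : ZMod (2 * s) × ZMod 2 ≃ Fin (4 * s) where
  toFun x := ⟨2 * x.1.val + x.2.val, by have := x.1.val_lt; have := x.2.val_lt; omega⟩
  invFun y := (((y : ℕ) / 2 : ℕ), ((y : ℕ) % 2 : ℕ))
  left_inv x := by
    have := x.2.val_lt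
    ext
    · simp only
      rw [show (2 * x.1.val + x.2.val) / 2 = x.1.val by omega, ZMod.natCast_zmod_val]
    · simp only
      rw [show (2 * x.1.val + x.2.val) % 2 = x.2.val by omega, ZMod.natCast_zmod_val]
  right_inv y := by
    ext
    simp only
    rw [ZMod.val_cast_of_lt (by omega), ZMod.val_cast_of_lt (by omega)]
    omega

def permEquiv : Perm (ZMod (2 * s) × ZMod 2) ≃* Perm (Fin (4 * s)) := (pointEquiv s).permCongrHom

variable {s}

lemma pointEquiv_val (x : ZMod (2 * s) × ZMod 2) :
    (pointEquiv s x : ℕ) = 2 * x.1.val + x.2.val := rfl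

lemma permEquiv_toggle_single (c : ZMod (2 * s)) :
    permEquiv s (toggle (Pi.single c 1)) = swap (pointEquiv s (c, 0)) (pointEquiv s (c, 1)) := by
  rw [toggle_single_eq_swap, permEquiv, permCongrHom_coe, permCongr_def, symm_trans_swap_trans]

lemma permEquiv_h₀ {p q : Fin (4 * s)} (hp : (p : ℕ) = 0) (hq : (q : ℕ) = 1) :
    permEquiv s (h₀ s) = swap p q := by
  rw [h₀, permEquiv_toggle_single]
  congr 1 <;> ext <;> simp [pointEquiv_val, hp, hq, ZMod.val_one]

lemma permEquiv_a₀ {p q p' q' : Fin (4 * s)} (hp : (p : ℕ) = 2 * s - 2) (hq : (q : ℕ) = 2 * s - 1)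
    (hp' : (p' : ℕ) = 4 * s - 2) (hq' : (q' : ℕ) = 4 * s - 1) :
    permEquiv s (a₀ s) = swap p q * swap p' q' := by
  have hs := NeZero.pos s
  have hc : ((s - 1 : ℕ) : ZMod (2 * s)).val = s - 1 := ZMod.val_cast_of_lt (by omega)
  have hc' : (((s - 1 : ℕ) : ZMod (2 * s)) + s).val = 2 * s - 1 := by
    rw [← Nat.cast_add, ZMod.val_cast_of_lt (by omega)]
    omega
  rw [a₀, antipodalPair, toggle_add, map_mul, permEquiv_toggle_single, permEquiv_toggle_single]
  congr 2 <;> ext <;> simp [pointEquiv_val, hc, hc', hp, hq, hp', hq', ZMod.val_one] <;> omega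

lemma permEquiv_g₀_apply (i : Fin (4 * s)) :
    (permEquiv s (g₀ s) i : ℕ) =
      if (i : ℕ) % 2 = 0 then (if (i : ℕ) = 4 * s - 2 then 0 else (i : ℕ) + 2)
      else (if (i : ℕ) = 4 * s - 1 then 1 else (i : ℕ) + 2) := by
  have hi := i.isLt
  have hval : (permEquiv s (g₀ s) i : ℕ) =
      2 * (((i / 2 + 1 : ℕ)) : ZMod (2 * s)).val + (((i % 2 : ℕ) : ZMod 2)).val := by
    simp [permEquiv, permCongrHom_coe, permCongr_apply, pointEquiv, g₀]
  rw [hval, ZMod.val_natCast, ZMod.val_cast_of_lt (by omega)]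
  rcases Nat.lt_or_ge (i / 2 + 1) (2 * s) with h | h
  · rw [Nat.mod_eq_of_lt h]
    split_ifs <;> omega
  · rw [show i / 2 + 1 = 2 * s by omega, Nat.mod_self]
    split_ifs <;> omega

lemma map_G₀ : (G₀ s).map (permEquiv s).toMonoidHom =
    Subgroup.closure {permEquiv s (h₀ s), permEquiv s (g₀ s)} := by
  rw [G₀, MonoidHom.map_closure, Set.image_pair]
  rfl

lemma map_R₀ : (R₀ s).map (permEquiv s).toMonoidHom =
    Subgroup.closure {permEquiv s (a₀ s), permEquiv s (h₀ s) * permEquiv s (g₀ s)} := by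
  rw [R₀, MonoidHom.map_closure, Set.image_pair, map_mul]
  rfl

lemma map_H₀ : (H₀ s).map (permEquiv s).toMonoidHom =
    Subgroup.closure {x | ∃ i : Fin s, x = permEquiv s (g₀ s) ^ (i : ℕ) * permEquiv s (h₀ s) *
      (permEquiv s (g₀ s) ^ (i : ℕ))⁻¹} := by
  rw [H₀, MonoidHom.map_closure]
  congr 1
  ext x
  simp [eq_comm]

end Bridge

end Lamplighter

open Lamplighter

/-- Let `s ≥ 2`, `G = ⟨h,g⟩ ≤ Sym(4s)` with `h = (1,2)`, `g = (1,3,…,4s−1)(2,4,…,4s)`,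
`H = ⟨h, h^g, …, h^{g^{s−1}}⟩`, and `R = ⟨a,b⟩` with `a = (2s−1,2s)(4s−1,4s)` and `b = gh`.
Then `R ∩ H = 1` and `|G| = |R|·|H|`, so `R` is a right transversal of `H` in `G`
(each right coset `Hx` with `x ∈ G` contains exactly one element of `R`).

Here `Sym(4s)` is realized as `Equiv.Perm (Fin (4s))` with points `0,…,4s−1` corresponding
to `1,…,4s`. Since the paper composes permutations left-to-right while Mathlib's
`Equiv.Perm` composes right-to-left, products are reversed: the paper's `h^{g^i} = g^{-i}hg^i`
is `g^i * h * (g^i)⁻¹` here, `b = gh` is `h * g`, and the paper's condition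
`r x⁻¹ ∈ H` (i.e. `r ∈ Hx`) is `x⁻¹ * r ∈ H` here. -/
theorem stmt9 (s : ℕ) (hs : 2 ≤ s)
    (h g a : Equiv.Perm (Fin (4 * s)))
    (hh : h = Equiv.swap ⟨0, by omega⟩ ⟨1, by omega⟩)
    (hg : ∀ i : Fin (4 * s), (g i : ℕ) =
      if (i : ℕ) % 2 = 0 then (if (i : ℕ) = 4 * s - 2 then 0 else (i : ℕ) + 2)
      else (if (i : ℕ) = 4 * s - 1 then 1 else (i : ℕ) + 2))
    (ha : a = Equiv.swap ⟨2 * s - 2, by omega⟩ ⟨2 * s - 1, by omega⟩ *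
      Equiv.swap ⟨4 * s - 2, by omega⟩ ⟨4 * s - 1, by omega⟩) :
    Subgroup.closure ({a, h * g} : Set (Equiv.Perm (Fin (4 * s)))) ⊓
      Subgroup.closure {x : Equiv.Perm (Fin (4 * s)) |
        ∃ i : Fin s, x = g ^ (i : ℕ) * h * (g ^ (i : ℕ))⁻¹} = ⊥ ∧
    Nat.card ↥(Subgroup.closure ({h, g} : Set (Equiv.Perm (Fin (4 * s))))) =
      Nat.card ↥(Subgroup.closure ({a, h * g} : Set (Equiv.Perm (Fin (4 * s))))) *
      Nat.card ↥(Subgroup.closure {x : Equiv.Perm (Fin (4 * s)) |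
        ∃ i : Fin s, x = g ^ (i : ℕ) * h * (g ^ (i : ℕ))⁻¹}) ∧
    ∀ x ∈ Subgroup.closure ({h, g} : Set (Equiv.Perm (Fin (4 * s)))),
      ∃! r : Equiv.Perm (Fin (4 * s)),
        r ∈ Subgroup.closure ({a, h * g} : Set (Equiv.Perm (Fin (4 * s)))) ∧
        x⁻¹ * r ∈ Subgroup.closure {x : Equiv.Perm (Fin (4 * s)) |
          ∃ i : Fin s, x = g ^ (i : ℕ) * h * (g ^ (i : ℕ))⁻¹} := by
  have : NeZero s := ⟨by omega⟩
  obtain rfl : h = permEquiv s (h₀ s) := hh.trans (permEquiv_h₀ rfl rfl).symm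
  obtain rfl : g = permEquiv s (g₀ s) :=
    Equiv.ext fun i => Fin.ext ((hg i).trans (permEquiv_g₀_apply i).symm)
  obtain rfl : a = permEquiv s (a₀ s) := ha.trans (permEquiv_a₀ rfl rfl rfl rfl).symm
  rw [← map_G₀, ← map_R₀, ← map_H₀]
  have hdisj := Subgroup.disjoint_map (f := (permEquiv s).toMonoidHom) (permEquiv s).injective
    (disjoint_R₀_H₀ (s := s))
  have hmul := Subgroup.coe_map_subset_mul (permEquiv s).toMonoidHom (G₀_subset_R₀_mul_H₀ (s := s))
  exact ⟨disjoint_iff.1 hdisj,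
    Subgroup.card_eq_card_mul_card_of_subset_mul (Subgroup.map_mono R₀_le_G₀)
      (Subgroup.map_mono H₀_le_G₀) hdisj hmul,
    fun x hx => Subgroup.existsUnique_inv_mul_mem_of_mem_mul hdisj (hmul hx)⟩
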